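/- Let H be a complex Hilbert space, let (V_l)_{l∈ℕ} be a family of nonzero finite-dimensional, pairwise orthogonal closed subspaces of H whose algebraic span is dense in H, and let A : H → H be a bounded linear operator with A(V_l) ⊆ V_l for every l. Then the point spectrum of A is the union of the point spectra of its blocks: a complex number λ is an eigenvalue of A if and only if there exist l ∈ ℕ and a nonzero vector v ∈ V_l with A v = λ v. -/

import Mathlib

open scoped InnerProductSpace

/-!
Each orthogonal projection `P l` onto a block commutes with `A`: both `P l ∘ A` and `A ∘ P l`
act as the identity on `V l` and vanish on every other block, so they agree on the dense span of
the blocks. If `A u = λ u` with `u ≠ 0`, some `P l u` is nonzero, since otherwise `u` would be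
orthogonal to a dense subspace; then `P l u ∈ V l` is an eigenvector of `A` for `λ`.
-/

namespace Submodule

variable {𝕜 E ι : Type*} [RCLike 𝕜] [NormedAddCommGroup E] [InnerProductSpace 𝕜 E]
  {V : ι → Submodule 𝕜 E} [∀ i, (V i).HasOrthogonalProjection]

theorem commute_starProjection_of_dense_iSup (horth : Pairwise fun i j => V i ⟂ V j)
    (hdense : Dense ((⨆ i, V i : Submodule 𝕜 E) : Set E)) {A : E →L[𝕜] E}
    (hA : ∀ i, ∀ x ∈ V i, A x ∈ V i) (l : ι) : Commute A (V l).starProjection := by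
  rw [iSup_eq_span] at hdense
  refine ContinuousLinearMap.ext_on hdense ?_
  rintro x ⟨_, ⟨m, rfl⟩, hx : x ∈ V m⟩
  change A ((V l).starProjection x) = (V l).starProjection (A x)
  obtain rfl | hml := eq_or_ne m l
  · rw [starProjection_eq_self_iff.2 hx, starProjection_eq_self_iff.2 (hA m x hx)]
  · rw [(starProjection_apply_eq_zero_iff _).2 ((horth hml).le hx),
      (starProjection_apply_eq_zero_iff _).2 ((horth hml).le (hA m x hx)), map_zero]

theorem exists_starProjection_ne_zero_of_dense_iSup
    (hdense : Dense ((⨆ i, V i : Submodule 𝕜 E) : Set E)) {u : E} (hu : u ≠ 0) :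
    ∃ i, (V i).starProjection u ≠ 0 := by
  by_contra! h
  have hperp : u ∈ (⨆ i, V i)ᗮ := by
    rw [← iInf_orthogonal, mem_iInf]
    exact fun i => (starProjection_apply_eq_zero_iff _).1 (h i)
  exact hu (hdense.eq_zero_of_mem_orthogonal hperp)

end Submodule

theorem invariant_operator_point_spectrum_eq_union_of_blocks_general
    {H : Type*} [NormedAddCommGroup H] [InnerProductSpace ℂ H]
    (V : ℕ → Submodule ℂ H) [∀ l, FiniteDimensional ℂ (V l)]
    (horth : ∀ l m, l ≠ m → ∀ x ∈ V l, ∀ y ∈ V m, ⟪x, y⟫_ℂ = 0)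
    (hdense : Dense ((⨆ l, V l : Submodule ℂ H) : Set H))
    (A : H →L[ℂ] H) (hA : ∀ l, ∀ x ∈ V l, A x ∈ V l) :
    ∀ lam : ℂ, (∃ u : H, u ≠ 0 ∧ A u = lam • u) ↔
      ∃ l : ℕ, ∃ v ∈ V l, v ≠ 0 ∧ A v = lam • v := by
  intro lam
  have horth' : Pairwise fun l m => V l ⟂ V m := fun l m hlm =>
    Submodule.isOrtho_iff_inner_eq.2 (horth l m hlm)
  refine ⟨fun ⟨u, hu, hAu⟩ => ?_, fun ⟨l, v, _, hv, hAv⟩ => ⟨v, hv, hAv⟩⟩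
  obtain ⟨l, hl⟩ := Submodule.exists_starProjection_ne_zero_of_dense_iSup hdense hu
  refine ⟨l, (V l).starProjection u, Submodule.starProjection_apply_mem _ _, hl, ?_⟩
  calc A ((V l).starProjection u) = (V l).starProjection (A u) :=
        congrArg (· u) (Submodule.commute_starProjection_of_dense_iSup horth' hdense hA l).eq
    _ = lam • (V l).starProjection u := by rw [hAu, map_smul]

/-- For a bounded operator leaving invariant each member of a complete orthogonal family of
nonzero finite-dimensional closed subspaces, the point spectrum is the union of the point
spectra of its blocks. -/
theorem invariant_operator_point_spectrum_eq_union_of_blocks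
    {H : Type*} [NormedAddCommGroup H] [InnerProductSpace ℂ H] [CompleteSpace H]
    (V : ℕ → Submodule ℂ H) [∀ l, FiniteDimensional ℂ (V l)]
    (hV0 : ∀ l, V l ≠ ⊥)
    (hVc : ∀ l, IsClosed (V l : Set H))
    (horth : ∀ l m, l ≠ m → ∀ x ∈ V l, ∀ y ∈ V m, ⟪x, y⟫_ℂ = 0)
    (hdense : Dense ((⨆ l, V l : Submodule ℂ H) : Set H))
    (A : H →L[ℂ] H) (hA : ∀ l, ∀ x ∈ V l, A x ∈ V l) :
    ∀ lam : ℂ, (∃ u : H, u ≠ 0 ∧ A u = lam • u) ↔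
      ∃ l : ℕ, ∃ v ∈ V l, v ≠ 0 ∧ A v = lam • v :=
  invariant_operator_point_spectrum_eq_union_of_blocks_general V horth hdense A hA
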